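/- arXiv:2412.12366 — 3 statements merged into one kernel-verified Lean document; each statement's English description precedes it below -/
import Mathlib

section
/- Let A be a C*-algebra, let a be a positive element of A, and let (a_n) be a sequence of positive elements of A such that a_n → a in norm and a_1 ≾ a_2 ≾ a_3 ≾ ⋯ with a_n ≾ a for every n. Then ⟨a⟩ is the supremum of the classes ⟨a_n⟩ in the following concrete sense: a_n ≾ a for every n, and for every positive element b of A satisfying a_n ≾ b for all n, one has a ≾ b. -/
/-- Cuntz subequivalence of elements of a (not necessarily unital) C*-algebra:
`x ≾ y` iff there is a sequence `d n` with `d n * y * (d n)* → x` in norm. -/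
def CuntzBelow {A : Type*} [NonUnitalCStarAlgebra A] (x y : A) : Prop :=
  ∃ d : ℕ → A, Filter.Tendsto (fun n => d n * y * star (d n)) Filter.atTop (nhds x)

theorem stmt0 {A : Type*} [NonUnitalCStarAlgebra A] [PartialOrder A] [StarOrderedRing A]
    (a : A) (ha : 0 ≤ a) (u : ℕ → A) (hu : ∀ n, 0 ≤ u n)
    (hlim : Filter.Tendsto u Filter.atTop (nhds a))
    (hmono : ∀ n, CuntzBelow (u n) (u (n + 1)))
    (hle : ∀ n, CuntzBelow (u n) a) :
    (∀ n, CuntzBelow (u n) a) ∧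
      ∀ b : A, 0 ≤ b → (∀ n, CuntzBelow (u n) b) → CuntzBelow a b := by
  refine ⟨hle, fun b _ hb => ?_⟩
  -- For each ε > 0 there is e with ‖e * b * star e - a‖ < ε.
  have key : ∀ ε : ℝ, 0 < ε → ∃ e : A, ‖e * b * star e - a‖ < ε := by
    intro ε hε
    obtain ⟨n, hn⟩ := (Metric.tendsto_atTop.mp hlim (ε / 2) (by positivity)) |>.imp
      (fun n h => h n le_rfl)
    obtain ⟨d, hd⟩ := hb n
    obtain ⟨m, hm⟩ := (Metric.tendsto_atTop.mp hd (ε / 2) (by positivity)) |>.imp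
      (fun m h => h m le_rfl)
    refine ⟨d m, ?_⟩
    have : ‖d m * b * star (d m) - a‖ ≤ ‖d m * b * star (d m) - u n‖ + ‖u n - a‖ :=
      norm_sub_le_norm_sub_add_norm_sub _ _ _
    rw [dist_eq_norm] at hn hm
    linarith
  choose e he using fun k : ℕ => key (1 / (k + 1)) (by positivity)
  refine ⟨e, ?_⟩
  rw [tendsto_iff_norm_sub_tendsto_zero]
  refine squeeze_zero (fun k => norm_nonneg _) (fun k => (he k).le) ?_
  exact tendsto_one_div_add_atTop_nhds_zero_nat
end

section
/- Let A be a C*-algebra, let a be a positive element of A, and suppose there exists a projection p in A with p ∼ a (Cuntz equivalence). Then there exists ε > 0 such that (a − ε)₊ ∼ a. -/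
/-- Cuntz equivalence of elements of a C*-algebra. -/
def CuntzEquiv {A : Type*} [NonUnitalCStarAlgebra A] (x y : A) : Prop :=
  CuntzBelow x y ∧ CuntzBelow y x

section Unital

variable {B : Type*} [CStarAlgebra B]

lemma spectrum_pos_of_norm_sub_one_lt_one {u : B} (hu : ‖u - 1‖ < 1) :
    ∀ t ∈ spectrum ℝ u, 0 < t := by
  nontriviality B using spectrum.of_subsingleton
  intro t ht
  have hmem : t - 1 ∈ spectrum ℝ (u - algebraMap ℝ B 1) := by
    rw [← spectrum.sub_singleton_eq]
    exact Set.sub_mem_sub ht rfl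
  have h : |t - 1| < 1 := by
    rw [map_one] at hmem
    exact (spectrum.norm_le_norm_of_mem hmem).trans_lt hu
  linarith [(abs_lt.mp h).1]

lemma cfc_inv_sqrt_mul_mul_cfc_inv_sqrt {u : B} (hu : IsSelfAdjoint u)
    (hspec : ∀ t ∈ spectrum ℝ u, 0 < t) :
    cfc (fun t : ℝ => (√t)⁻¹) u * u * cfc (fun t : ℝ => (√t)⁻¹) u = 1 := by
  have hcont : ContinuousOn (fun t : ℝ => (√t)⁻¹) (spectrum ℝ u) :=
    Real.continuous_sqrt.continuousOn.inv₀ fun t ht => (Real.sqrt_pos.mpr (hspec t ht)).ne'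
  nth_rw 2 [← cfc_id' ℝ u]
  rw [← cfc_mul _ _ u hcont (continuousOn_id' _),
    ← cfc_mul (fun t : ℝ => (√t)⁻¹ * t) _ u (hcont.mul (continuousOn_id' _)) hcont,
    ← cfc_const_one ℝ u]
  refine cfc_congr fun t ht => ?_
  have ht0 := hspec t ht
  field_simp
  exact (Real.sq_sqrt ht0.le).symm

lemma IsStarProjection.exists_conj_eq_of_corner_norm_sub_lt_one {P Y : B}
    (hP : IsStarProjection P) (hY : IsSelfAdjoint Y) (hPY : P * Y = Y) (hYP : Y * P = Y)
    (h : ‖Y - P‖ < 1) : ∃ w, w * Y * star w = P ∧ w * P = w := by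
  set u : B := 1 - P + Y
  have hu : IsSelfAdjoint u := ((IsSelfAdjoint.one B).sub hP.isSelfAdjoint).add hY
  have hPu : P * u = Y := by
    simp only [u, mul_add, mul_sub, mul_one, hP.isIdempotentElem.eq, hPY, sub_self, zero_add]
  have huP : u * P = Y := by
    simp only [u, add_mul, sub_mul, one_mul, hP.isIdempotentElem.eq, hYP, sub_self, zero_add]
  have hu1 : ‖u - 1‖ < 1 := by rwa [show u - 1 = Y - P by simp only [u]; abel]
  set v := cfc (fun t : ℝ => (√t)⁻¹) u
  have hv : v * u * v = 1 :=
    cfc_inv_sqrt_mul_mul_cfc_inv_sqrt hu (spectrum_pos_of_norm_sub_one_lt_one hu1)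
  have hPv : Commute P v := (Commute.cfc_real (hPu.trans huP.symm : Commute P u).symm _).symm
  refine ⟨v * P, ?_, by rw [mul_assoc, hP.isIdempotentElem.eq]⟩
  rw [star_mul, hP.isSelfAdjoint.star_eq, (cfc_predicate _ u : IsSelfAdjoint v).star_eq]
  calc v * P * Y * (P * v) = v * (P * Y * P) * v := by noncomm_ring
    _ = v * u * (P * v) := by rw [hPY, hYP, ← huP]; noncomm_ring
    _ = v * u * v * P := by rw [hPv.eq]; simp only [mul_assoc]
    _ = P := by rw [hv, one_mul]

end Unital

section NonUnital

variable {A : Type*} [NonUnitalCStarAlgebra A]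

lemma norm_mul_mul_star_le (c x : A) : ‖c * x * star c‖ ≤ ‖c‖ ^ 2 * ‖x‖ :=
  calc ‖c * x * star c‖ ≤ ‖c‖ * ‖x‖ * ‖star c‖ := norm_mul₃_le
    _ = ‖c‖ ^ 2 * ‖x‖ := by rw [norm_star]; ring

lemma IsStarProjection.exists_conj_eq_of_norm_sub_lt_one {p x : A} (hp : IsStarProjection p)
    (hx : IsSelfAdjoint x) (h : ‖x - p‖ < 1) : ∃ d, d * x * star d = p := by
  set y := p * x * p
  have hpp := hp.isIdempotentElem.eq
  have hpy : p * y = y := by simp only [y, ← mul_assoc, hpp]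
  have hyp : y * p = y := by simp only [y, mul_assoc, hpp]
  have hy_lt : ‖(y : Unitization ℂ A) - p‖ < 1 := by
    rw [← Unitization.inr_sub, Unitization.norm_inr]
    calc ‖y - p‖ = ‖p * (x - p) * p‖ := by simp only [y, mul_sub, sub_mul, hpp]
      _ ≤ ‖p‖ * ‖x - p‖ * ‖p‖ := norm_mul₃_le
      _ ≤ 1 * ‖x - p‖ * 1 := by gcongr <;> exact hp.norm_le
      _ < 1 := by simpa using h
  obtain ⟨w, hw, hwp⟩ := (hp.inr (R := ℂ)).exists_conj_eq_of_corner_norm_sub_lt_one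
    ((hx.conjugate_self hp.isSelfAdjoint).inr ℂ) (by rw [← Unitization.inr_mul, hpy])
    (by rw [← Unitization.inr_mul, hyp]) hy_lt
  have hw0 : w.fst = 0 := by rw [← hwp, Unitization.fst_mul, Unitization.fst_inr, mul_zero]
  lift w to A using hw0 with d
  have hd : d * y * star d = p := Unitization.inr_injective (R := ℂ) <| by
    rwa [Unitization.inr_mul, Unitization.inr_mul, Unitization.inr_star]
  refine ⟨d * p, ?_⟩
  rw [star_mul, hp.isSelfAdjoint.star_eq]
  calc d * p * x * (p * star d) = d * y * star d := by simp only [y, mul_assoc]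
    _ = p := hd

lemma IsStarProjection.exists_conj_eq_of_norm_conj_sub_lt_one {p b c : A}
    (hp : IsStarProjection p) (hb : IsSelfAdjoint b) (h : ‖c * b * star c - p‖ < 1) :
    ∃ v, v * b * star v = p := by
  obtain ⟨d, hd⟩ := hp.exists_conj_eq_of_norm_sub_lt_one (hb.conjugate c) h
  exact ⟨d * c, by simpa only [star_mul, mul_assoc] using hd⟩

lemma CuntzBelow.exists_conj_eq_of_isStarProjection {p b : A} (h : CuntzBelow p b)
    (hp : IsStarProjection p) (hb : IsSelfAdjoint b) : ∃ v, v * b * star v = p := by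
  obtain ⟨d, hd⟩ := h
  obtain ⟨N, hN⟩ := Metric.tendsto_atTop.mp hd 1 one_pos
  exact hp.exists_conj_eq_of_norm_conj_sub_lt_one hb (by simpa [dist_eq_norm] using hN N le_rfl)

lemma CuntzBelow.of_conj_eq {x y d : A} (h : d * y * star d = x) : CuntzBelow x y :=
  ⟨fun _ => d, by simpa only [h] using tendsto_const_nhds⟩

lemma CuntzBelow.trans_conj_eq {x y z v : A} (hxy : CuntzBelow x y) (hy : v * z * star v = y) :
    CuntzBelow x z := by
  obtain ⟨d, hd⟩ := hxy
  refine ⟨fun n => d n * v, ?_⟩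
  simpa only [star_mul, ← hy, mul_assoc] using hd

lemma cuntzBelow_cfcₙ_max_sub {a : A} (ha : IsSelfAdjoint a) {ε : ℝ} (hε : 0 < ε) :
    CuntzBelow (cfcₙ (fun s : ℝ => max (s - ε) 0) a) a := by
  -- `(a - ε)₊ = g(a) a g(a)` with `g = √((s - ε)₊ / s)`; cutting the denominator off at `ε`
  -- keeps `g` continuous.
  set g : ℝ → ℝ := fun s => √(max (s - ε) 0 / max s ε)
  have hg : Continuous g := Real.continuous_sqrt.comp <|
    ((continuous_id.sub continuous_const).max continuous_const).div
      (continuous_id.max continuous_const) fun s => (hε.trans_le (le_max_right s ε)).ne'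
  have hg0 : g 0 = 0 := by simp [g, hε.le]
  have hgsg : ∀ s, g s * (s * g s) = max (s - ε) 0 := by
    intro s
    rcases le_total s ε with hs | hs
    · simp [g, hs]
    · have hsq : g s * g s = (s - ε) / s := by
        simp only [g, max_eq_left hs, max_eq_left (sub_nonneg.mpr hs)]
        exact Real.mul_self_sqrt (div_nonneg (sub_nonneg.mpr hs) (hε.le.trans hs))
      rw [max_eq_left (sub_nonneg.mpr hs), mul_left_comm, hsq]
      field_simp [(hε.trans_le hs).ne']
  refine CuntzBelow.of_conj_eq (d := cfcₙ g a) ?_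
  rw [(cfcₙ_predicate g a).star_eq, mul_assoc]
  nth_rw 2 [← cfcₙ_id' ℝ a]
  rw [← cfcₙ_mul _ _ a (continuousOn_id' _) rfl hg.continuousOn hg0,
    ← cfcₙ_mul g (fun s => s * g s) a hg.continuousOn hg0
      ((continuousOn_id' _).mul hg.continuousOn) (by simp)]
  exact cfcₙ_congr fun s _ => hgsg s

lemma norm_cfcₙ_max_sub_sub_le [PartialOrder A] [StarOrderedRing A] {a : A} (ha : 0 ≤ a)
    {ε : ℝ} (hε : 0 ≤ ε) : ‖cfcₙ (fun s : ℝ => max (s - ε) 0) a - a‖ ≤ ε := by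
  have hcont : Continuous fun s : ℝ => max (s - ε) 0 := by fun_prop
  nth_rw 2 [← cfcₙ_id' ℝ a]
  rw [← cfcₙ_sub _ _ a hcont.continuousOn (by simp [hε]) (continuousOn_id' _) rfl]
  refine norm_cfcₙ_le fun s hs => ?_
  have hs0 := quasispectrum_nonneg_of_nonneg a ha s hs
  rw [Real.norm_eq_abs, abs_le]
  constructor <;> rcases max_cases (s - ε) 0 with ⟨h, _⟩ | ⟨h, _⟩ <;> linarith

end NonUnital

theorem stmt2 {A : Type*} [NonUnitalCStarAlgebra A] [PartialOrder A] [StarOrderedRing A]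
    (a p : A) (ha : 0 ≤ a)
    (hp_sa : IsSelfAdjoint p) (hp_idem : IsIdempotentElem p)
    (h : CuntzEquiv p a) :
    ∃ ε : ℝ, 0 < ε ∧ CuntzEquiv (cfcₙ (fun s : ℝ => max (s - ε) 0) a) a := by
  have hp : IsStarProjection p := ⟨hp_idem, hp_sa⟩
  have ha' : IsSelfAdjoint a := .of_nonneg ha
  obtain ⟨c, hc⟩ := h.1.exists_conj_eq_of_isStarProjection hp ha'
  set ε := (‖c‖ ^ 2 + 1)⁻¹
  have hε : 0 < ε := by positivity
  set b := cfcₙ (fun s : ℝ => max (s - ε) 0) a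
  have hcb : ‖c * b * star c - p‖ < 1 :=
    calc ‖c * b * star c - p‖ = ‖c * (b - a) * star c‖ := by rw [← hc]; noncomm_ring
      _ ≤ ‖c‖ ^ 2 * ε := (norm_mul_mul_star_le c _).trans <| by
        gcongr; exact norm_cfcₙ_max_sub_sub_le ha hε.le
      _ < 1 := by rw [← div_eq_mul_inv, div_lt_one (by positivity)]; linarith
  obtain ⟨v, hv⟩ := hp.exists_conj_eq_of_norm_conj_sub_lt_one (cfcₙ_predicate _ a) hcb
  exact ⟨ε, hε, cuntzBelow_cfcₙ_max_sub ha' hε, h.2.trans_conj_eq hv⟩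
end

section
/- Let A be a unital C*-algebra, let τ be a faithful tracial state on A, and let a be a positive element of A whose spectrum contains a sequence of strictly positive real numbers converging to 0 (i.e., 0 is a non-isolated accumulation point of the spectrum of a from the right). Then for every ε > 0 one has d_τ((a − ε)₊) < d_τ(a), where d_τ(x) denotes the limit as n → ∞ of τ(x^{1/n}) (which exists since the sequence τ(x^{1/n}) is nondecreasing and bounded for positive x). -/
/-!
Split `s ^ (1/n) = min s 1 ^ (1/n) + max s 1 ^ (1/n) - 1`: the first summand increases and the
second decreases with `n`, both boundedly, so `τ (x ^ (1/n))` converges for every positive `x`.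
Pick `δ ∈ spectrum a ∩ (0, ε)` and the bump `g s = min (min s 1) (max (ε - s) 0)`, which is
positive at `δ` and vanishes from `ε` on. Pointwise on the spectrum
`((s - ε)₊) ^ (1/n) + g s ≤ s ^ (1/n)`, hence
`τ ((a - ε)₊ ^ (1/n)) + τ (g a) ≤ τ (a ^ (1/n))` for all `n ≥ 1`,
and faithfulness makes the gap `τ (g a)` strictly positive.
-/

open Filter Topology

lemma Real.rpow_max_sub_zero_add_le {s ε p : ℝ} (hs : 0 ≤ s) (hε : 0 ≤ ε) (hp0 : 0 < p)
    (hp1 : p ≤ 1) : max (s - ε) 0 ^ p + min (min s 1) (max (ε - s) 0) ≤ s ^ p := by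
  rcases le_total s ε with h | h
  · rw [max_eq_right (by linarith), Real.zero_rpow hp0.ne', zero_add]
    calc min (min s 1) (max (ε - s) 0) ≤ min s 1 := min_le_left _ _
      _ ≤ min s 1 ^ p :=
        Real.self_le_rpow_of_le_one (le_min hs zero_le_one) (min_le_right _ _) hp1
      _ ≤ s ^ p := Real.rpow_le_rpow (le_min hs zero_le_one) (min_le_left _ _) hp0.le
  · rw [max_eq_right (by linarith : ε - s ≤ 0), min_eq_right (le_min hs zero_le_one), add_zero]
    exact Real.rpow_le_rpow (le_max_right _ _) (max_le (by linarith) hs) hp0.le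

lemma cfc_rpow_eq_cfc_min_rpow_add_cfc_max_rpow_sub_one {A : Type*} [CStarAlgebra A] {x : A}
    (hx : IsSelfAdjoint x) {p : ℝ} (hp : 0 ≤ p) :
    cfc (fun s : ℝ => s ^ p) x
      = cfc (fun s : ℝ => min s 1 ^ p) x + cfc (fun s : ℝ => max s 1 ^ p) x - 1 := by
  rw [← cfc_add .., ← cfc_const_one ℝ x, ← cfc_sub ..]
  refine cfc_congr fun s _ => ?_
  rcases le_total s 1 with h | h <;> simp [h]

lemma cfc_rpow_cfc_max_sub_zero_add_le {A : Type*} [CStarAlgebra A] [PartialOrder A]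
    [StarOrderedRing A] {a : A} (ha : 0 ≤ a) {ε p : ℝ} (hε : 0 ≤ ε) (hp0 : 0 < p)
    (hp1 : p ≤ 1) :
    cfc (fun s : ℝ => s ^ p) (cfc (fun s : ℝ => max (s - ε) 0) a)
      + cfc (fun s : ℝ => min (min s 1) (max (ε - s) 0)) a ≤ cfc (fun s : ℝ => s ^ p) a := by
  -- discharges the continuity side conditions of `cfc_comp'` and `cfc_add`
  have hp : 0 ≤ p := hp0.le
  rw [← cfc_comp' (fun s : ℝ => s ^ p) (fun s : ℝ => max (s - ε) 0) a,
    ← cfc_add a (fun s : ℝ => max (s - ε) 0 ^ p)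
      (fun s : ℝ => min (min s 1) (max (ε - s) 0))]
  exact cfc_mono fun s hs =>
    Real.rpow_max_sub_zero_add_le (spectrum_nonneg_of_nonneg ha hs) hε hp0 hp1

section PositiveFunctional

variable {A : Type*} [CStarAlgebra A] [PartialOrder A] [StarOrderedRing A] {τ : A →ₗ[ℂ] ℂ}

lemma re_map_mono (hτ : ∀ x : A, 0 ≤ x → 0 ≤ (τ x).re) {p q : A} (h : p ≤ q) :
    (τ p).re ≤ (τ q).re := by
  have := hτ (q - p) (sub_nonneg.2 h)
  rwa [map_sub, Complex.sub_re, sub_nonneg] at this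

lemma re_map_cfc_mono (hτ : ∀ x : A, 0 ≤ x → 0 ≤ (τ x).re) {x : A} {f g : ℝ → ℝ}
    (h : ∀ s ∈ spectrum ℝ x, f s ≤ g s)
    (hf : ContinuousOn f (spectrum ℝ x) := by cfc_cont_tac)
    (hg : ContinuousOn g (spectrum ℝ x) := by cfc_cont_tac) :
    (τ (cfc f x)).re ≤ (τ (cfc g x)).re :=
  re_map_mono hτ (cfc_mono h)

lemma exists_tendsto_re_map_cfc_rpow_one_div (hτ : ∀ x : A, 0 ≤ x → 0 ≤ (τ x).re) {x : A}
    (hx : 0 ≤ x) :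
    ∃ L : ℝ, Tendsto (fun n : ℕ => (τ (cfc (fun s : ℝ => s ^ ((1 : ℝ) / n)) x)).re)
      atTop (𝓝 L) := by
  have hspec : ∀ s ∈ spectrum ℝ x, 0 ≤ s := fun s hs => spectrum_nonneg_of_nonneg hx hs
  have hexp : ∀ n : ℕ, 0 ≤ (1 : ℝ) / (n + 1) := fun n => by positivity
  set u : ℕ → ℝ := fun n => (τ (cfc (fun s : ℝ => min s 1 ^ ((1 : ℝ) / (n + 1))) x)).re
  set v : ℕ → ℝ := fun n => (τ (cfc (fun s : ℝ => max s 1 ^ ((1 : ℝ) / (n + 1))) x)).re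
  have hu : Monotone u := fun m n hmn => re_map_cfc_mono hτ
    fun s hs => Real.rpow_le_rpow_of_exponent_ge' (le_min (hspec s hs) zero_le_one)
      (min_le_right _ _) (hexp n) (Nat.one_div_le_one_div hmn)
  have hu_bdd : BddAbove (Set.range u) := by
    refine ⟨(τ (cfc (fun _ : ℝ => (1 : ℝ)) x)).re, ?_⟩
    rintro _ ⟨n, rfl⟩
    exact re_map_cfc_mono hτ fun s hs =>
      Real.rpow_le_one (le_min (hspec s hs) zero_le_one) (min_le_right _ _) (hexp n)
  have hv : Antitone v := fun m n hmn => re_map_cfc_mono hτ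
    fun s _ => Real.rpow_le_rpow_of_exponent_le (le_max_right _ _) (Nat.one_div_le_one_div hmn)
  have hv_bdd : BddBelow (Set.range v) := by
    refine ⟨(τ (cfc (fun _ : ℝ => (1 : ℝ)) x)).re, ?_⟩
    rintro _ ⟨n, rfl⟩
    exact re_map_cfc_mono hτ fun s _ =>
      Real.one_le_rpow (le_max_right _ _) (hexp n)
  have hsum : ∀ n : ℕ, (τ (cfc (fun s : ℝ => s ^ ((1 : ℝ) / ↑(n + 1))) x)).re
      = u n + v n - (τ 1).re := fun n => by
    rw [Nat.cast_succ, cfc_rpow_eq_cfc_min_rpow_add_cfc_max_rpow_sub_one hx.isSelfAdjoint (hexp n),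
      map_sub, map_add, Complex.sub_re, Complex.add_re]
  refine ⟨(⨆ n, u n) + (⨅ n, v n) - (τ 1).re, (tendsto_add_atTop_iff_nat 1).1 ?_⟩
  simp_rw [hsum]
  exact ((tendsto_atTop_ciSup hu hu_bdd).add (tendsto_atTop_ciInf hv hv_bdd)).sub_const _

lemma re_map_cfc_pos_of_mem_spectrum
    (hτ_pos : ∀ x : A, 0 ≤ x → 0 ≤ (τ x).re ∧ (τ x).im = 0)
    (hτ_faithful : ∀ x : A, 0 ≤ x → τ x = 0 → x = 0) {x : A} (hx : IsSelfAdjoint x)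
    {g : ℝ → ℝ} (hg : ContinuousOn g (spectrum ℝ x))
    (hg0 : ∀ s ∈ spectrum ℝ x, 0 ≤ g s)
    {δ : ℝ} (hδ : δ ∈ spectrum ℝ x) (hgδ : g δ ≠ 0) : 0 < (τ (cfc g x)).re := by
  have hc : 0 ≤ cfc g x := cfc_nonneg hg0
  have hc_ne : cfc g x ≠ 0 := by
    intro h
    have hmem : g δ ∈ spectrum ℝ (cfc g x) := by
      rw [cfc_map_spectrum g x]
      exact ⟨δ, hδ, rfl⟩
    rw [h, spectrum.mem_iff, sub_zero] at hmem
    exact hmem ((isUnit_iff_ne_zero.2 hgδ).map (algebraMap ℝ A))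
  refine (hτ_pos _ hc).1.lt_of_ne fun h => hc_ne (hτ_faithful _ hc ?_)
  exact Complex.ext h.symm (hτ_pos _ hc).2

end PositiveFunctional

theorem stmt3_general {A : Type*} [CStarAlgebra A] [PartialOrder A] [StarOrderedRing A]
    (τ : A →ₗ[ℂ] ℂ)
    (hτ_pos : ∀ x : A, 0 ≤ x → 0 ≤ (τ x).re ∧ (τ x).im = 0)
    (hτ_faithful : ∀ x : A, 0 ≤ x → τ x = 0 → x = 0)
    (a : A) (ha : 0 ≤ a)
    (hsp : ∃ e : ℕ → ℝ, (∀ n, e n ∈ spectrum ℝ a ∧ 0 < e n) ∧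
      Filter.Tendsto e Filter.atTop (nhds 0)) :
    ∀ ε : ℝ, 0 < ε →
      ∃ L M : ℝ,
        Filter.Tendsto
          (fun n : ℕ =>
            (τ (cfc (fun s : ℝ => s ^ ((1 : ℝ) / n))
              (cfc (fun s : ℝ => max (s - ε) 0) a))).re)
          Filter.atTop (nhds L) ∧
        Filter.Tendsto
          (fun n : ℕ => (τ (cfc (fun s : ℝ => s ^ ((1 : ℝ) / n)) a)).re)
          Filter.atTop (nhds M) ∧
        L < M := by
  intro ε hε
  have hτ : ∀ x : A, 0 ≤ x → 0 ≤ (τ x).re := fun x hx => (hτ_pos x hx).1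
  obtain ⟨e, he, hlim⟩ := hsp
  obtain ⟨k, hk⟩ := (hlim.eventually (gt_mem_nhds hε)).exists
  obtain ⟨L, hL⟩ := exists_tendsto_re_map_cfc_rpow_one_div hτ
    (cfc_nonneg fun s _ => le_max_right (s - ε) 0 : 0 ≤ cfc (fun s : ℝ => max (s - ε) 0) a)
  obtain ⟨M, hM⟩ := exists_tendsto_re_map_cfc_rpow_one_div hτ ha
  refine ⟨L, M, hL, hM, ?_⟩
  set g : ℝ → ℝ := fun s => min (min s 1) (max (ε - s) 0)
  have hgap : 0 < (τ (cfc g a)).re :=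
    re_map_cfc_pos_of_mem_spectrum hτ_pos hτ_faithful ha.isSelfAdjoint (by fun_prop)
      (fun s hs => le_min (le_min (spectrum_nonneg_of_nonneg ha hs) zero_le_one)
        (le_max_right _ _))
      (he k).1 (lt_min (lt_min (he k).2 one_pos) (lt_max_of_lt_left (sub_pos.2 hk))).ne'
  have hle : L + (τ (cfc g a)).re ≤ M := by
    refine le_of_tendsto_of_tendsto (hL.add_const _) hM ?_
    filter_upwards [eventually_ge_atTop 1] with n hn
    have hn' : (1 : ℝ) ≤ n := by exact_mod_cast hn
    have := re_map_mono hτ (cfc_rpow_cfc_max_sub_zero_add_le ha hε.le (p := 1 / n)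
      (by positivity) ((div_le_one (by positivity)).2 hn'))
    rwa [map_add, Complex.add_re] at this
  linarith

theorem stmt3 {A : Type*} [CStarAlgebra A] [PartialOrder A] [StarOrderedRing A]
    (τ : A →ₗ[ℂ] ℂ)
    (hτ_unit : τ 1 = 1)
    (hτ_pos : ∀ x : A, 0 ≤ x → 0 ≤ (τ x).re ∧ (τ x).im = 0)
    (hτ_faithful : ∀ x : A, 0 ≤ x → τ x = 0 → x = 0)
    (hτ_trace : ∀ x y : A, τ (x * y) = τ (y * x))
    (a : A) (ha : 0 ≤ a)
    (hsp : ∃ e : ℕ → ℝ, (∀ n, e n ∈ spectrum ℝ a ∧ 0 < e n) ∧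
      Filter.Tendsto e Filter.atTop (nhds 0)) :
    ∀ ε : ℝ, 0 < ε →
      ∃ L M : ℝ,
        Filter.Tendsto
          (fun n : ℕ =>
            (τ (cfc (fun s : ℝ => s ^ ((1 : ℝ) / n))
              (cfc (fun s : ℝ => max (s - ε) 0) a))).re)
          Filter.atTop (nhds L) ∧
        Filter.Tendsto
          (fun n : ℕ => (τ (cfc (fun s : ℝ => s ^ ((1 : ℝ) / n)) a)).re)
          Filter.atTop (nhds M) ∧
        L < M :=
  stmt3_general τ hτ_pos hτ_faithful a ha hsp
end
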